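/- arXiv:1106.4403 — 2 statements merged into one kernel-verified Lean document; each statement's English description precedes it below -/
import Mathlib

section
/- The AND gadget computes conjunction: in the triangle graph K3 with input vertices 1,2 and output vertex 3, for any input assignment (a,b) ∈ {0,1}², if vertex i (i=1,2) is initially black exactly when the corresponding input bit is 1 and vertex 3 is initially white, then vertex 3 is black in the final coloring if and only if a = b = 1. -/
/-- The zero forcing closure: `ZFClosure G S v` holds iff vertex `v` eventually
becomes black when the vertices of `S` are initially black and the color-change
rule (a black vertex with exactly one white neighbor forces that neighbor black)
is applied exhaustively. -/
inductive ZFClosure {V : Type*} (G : SimpleGraph V) (S : Set V) : V → Prop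
  | init {v : V} : v ∈ S → ZFClosure G S v
  | force {u v : V} : ZFClosure G S u → G.Adj u v →
      (∀ w, G.Adj u w → w ≠ v → ZFClosure G S w) → ZFClosure G S v

/-- The final coloring (closure) of the initial black set `S`. -/
def zfCl {V : Type*} (G : SimpleGraph V) (S : Set V) : Set V := {v | ZFClosure G S v}

/-- `S` is a zero forcing set iff its final coloring is all of `V`. -/
def IsZeroForcingSet {V : Type*} (G : SimpleGraph V) (S : Set V) : Prop :=
  zfCl G S = Set.univ

/-- The initial coloring of the AND gadget: input vertex `0` is black iff
`a = true`, input vertex `1` is black iff `b = true`, output vertex `2` white. -/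
def andInput (a b : Bool) : Set (Fin 3) :=
  {v | (v = 0 ∧ a = true) ∨ (v = 1 ∧ b = true)}

section Complete

variable {V : Type*}

theorem ZFClosure.mem_of_subsingleton_top (hV : ∀ u v : V, ∃ w, w ≠ u ∧ w ≠ v)
    {S : Set V} (hS : S.Subsingleton) {v : V} (hv : ZFClosure ⊤ S v) : v ∈ S := by
  induction hv with
  | init h => exact h
  | @force u v _ _ _ ihu ihall =>
    -- A third vertex `w` is a white neighbour of `u` besides `v`, so `u` cannot force `v`.
    obtain ⟨w, hwu, hwv⟩ := hV u v
    exact absurd (hS (ihall w ((SimpleGraph.top_adj _ _).mpr hwu.symm) hwv) ihu) hwu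

theorem ZFClosure.force_top {S : Set V} {u v : V} (hu : ZFClosure ⊤ S u) (huv : u ≠ v)
    (hothers : ∀ w, w ≠ u → w ≠ v → ZFClosure ⊤ S w) : ZFClosure ⊤ S v :=
  .force hu ((SimpleGraph.top_adj _ _).mpr huv) fun w huw hwv ↦
    hothers w ((SimpleGraph.top_adj _ _).mp huw).symm hwv

end Complete

theorem exists_ne_ne_fin_three (u v : Fin 3) : ∃ w, w ≠ u ∧ w ≠ v := by
  revert u v; decide

theorem two_notMem_andInput (a b : Bool) : (2 : Fin 3) ∉ andInput a b := by
  simp [andInput]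

theorem andInput_subsingleton {a b : Bool} (hab : ¬(a = true ∧ b = true)) :
    (andInput a b).Subsingleton := by
  cases a <;> cases b <;> simp_all [andInput, Set.Subsingleton]

/-- The AND gadget (the triangle `K₃` with inputs `0,1` and output `2`)
computes conjunction: the output vertex ends up black iff both inputs are `1`. -/
theorem and_gadget_correct (a b : Bool) :
    (2 : Fin 3) ∈ zfCl (⊤ : SimpleGraph (Fin 3)) (andInput a b) ↔ (a = true ∧ b = true) := by
  constructor
  · intro h
    by_contra hab
    exact two_notMem_andInput a b <|
      ZFClosure.mem_of_subsingleton_top exists_ne_ne_fin_three (andInput_subsingleton hab) h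
  · rintro ⟨rfl, rfl⟩
    refine ZFClosure.force_top (u := 0) (.init (by simp [andInput])) (by decide) fun w hw0 hw2 ↦ ?_
    obtain rfl : w = 1 := by omega
    exact .init (by simp [andInput])
end

section
/- The OR gadget computes disjunction: in the graph with vertices {1,2,3,4} and edges {1,3},{1,4},{2,3},{2,4}, where vertex 3 is always initially black, vertices 1,2 are the inputs (black iff the input bit is 1), and vertex 4 is initially white, the final coloring has vertex 4 black if and only if at least one of the input bits is 1. -/
/-- The complete bipartite graph `K_{2,2}` on vertices `0,1,2,3` with parts
`{0,1}` and `{2,3}` (vertices `1,2,3,4` of the paper are `0,1,2,3`). -/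
def K22 : SimpleGraph (Fin 4) :=
  SimpleGraph.fromRel (fun i j => i.val < 2 ∧ 2 ≤ j.val)

/-- The initial coloring of the OR gadget: the ancilla vertex `2` is always
black, input vertex `0` is black iff `a = true`, input vertex `1` iff `b = true`,
output vertex `3` white. -/
def orInput (a b : Bool) : Set (Fin 4) :=
  {v | v = 2 ∨ (v = 0 ∧ a = true) ∨ (v = 1 ∧ b = true)}

/-!
With both inputs white the only black vertex is the ancilla, whose two neighbours are both
white, so no force ever applies and the output stays white. A black input vertex has just two
neighbours, the black ancilla and the output, so it forces the output.
-/

theorem zfCl_subset_of_stalled {V : Type*} {G : SimpleGraph V} {S T : Set V} (hST : S ⊆ T)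
    (hT : ∀ u ∈ T, ∀ v ∉ T, G.Adj u v → ∃ w ∉ T, G.Adj u w ∧ w ≠ v) : zfCl G S ⊆ T := by
  intro v hv
  induction hv with
  | init hv => exact hST hv
  | force _ huv _ hu hothers =>
    by_contra hv
    obtain ⟨w, hw, huw, hwv⟩ := hT _ hu _ hv huv
    exact hw (hothers w huw hwv)

instance : DecidableRel K22.Adj := fun u v => by
  unfold K22; infer_instance

theorem zfCl_K22_orInput_false_false : zfCl K22 (orInput false false) ⊆ {2} := by
  refine zfCl_subset_of_stalled (by simp [orInput]) ?_
  rintro u rfl v hv huv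
  simp only [Set.mem_singleton_iff] at hv ⊢
  revert v; decide

theorem three_mem_zfCl_K22 {S : Set (Fin 4)} {u : Fin 4} (hu : u.val < 2) (huS : u ∈ S)
    (h2 : 2 ∈ S) : 3 ∈ zfCl K22 S := by
  have neighbors : ∀ x : Fin 4, x.val < 2 → K22.Adj x 3 ∧ ∀ w, K22.Adj x w → w ≠ 3 → w = 2 := by
    decide
  obtain ⟨hu3, hnbr⟩ := neighbors u hu
  exact .force (.init huS) hu3 fun w huw hw3 => .init (hnbr w huw hw3 ▸ h2)

/-- The OR gadget (`K_{2,2}` with inputs `0,1`, pre-colored ancilla `2` and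
output `3`) computes disjunction. -/
theorem or_gadget_correct (a b : Bool) :
    (3 : Fin 4) ∈ zfCl K22 (orInput a b) ↔ (a = true ∨ b = true) := by
  constructor
  · contrapose!
    simp only [ne_eq, Bool.not_eq_true, and_imp]
    rintro rfl rfl h3
    exact absurd (zfCl_K22_orInput_false_false h3) (by decide)
  · have h2 : (2 : Fin 4) ∈ orInput a b := by simp [orInput]
    rintro (ha | hb)
    · exact three_mem_zfCl_K22 (u := 0) (by decide) (by simp [orInput, ha]) h2
    · exact three_mem_zfCl_K22 (u := 1) (by decide) (by simp [orInput, hb]) h2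
end
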